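/- arXiv:1603.07067 — 3 statements merged into one kernel-verified Lean document; each statement's English description precedes it below -/
import Mathlib

section
/- (Square sieve of Heath-Brown.) There is an absolute constant C with the following property. Let ξ : ℕ → ℝ_{≥0} be a function with Σ_{n ∈ ℕ} ξ(n) < ∞, let 𝔓 be a set consisting of P prime numbers, and suppose ξ(0) = 0 and ξ(n) = 0 for all n ≥ e^P. Then Σ_{n ∈ ℕ} ξ(n²) ≤ C · ( (1/P) Σ_{n ∈ ℕ} ξ(n) + (1/P²) Σ_{p, q ∈ 𝔓, p ≠ q} | Σ_{n ∈ ℕ} ξ(n) (n/pq) | ), where (·/pq) denotes the Jacobi symbol modulo pq. -/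
/-!
Weight `n` by `S(n)²`, where `S(n) = ∑_{p ∈ 𝔓} (n/p)`. Expanding the square and using
`(n/p)(n/q) = (n/pq)` for `p ≠ q`, the weighted sum `∑ ξ(n) S(n)²` is at most `P ∑ ξ(n)` plus the
off-diagonal Jacobi sums. Conversely, `(m²/p) = 1` unless `p ∣ m`, and a square `m²` in the support
of `ξ` has `m < e^{P/2}`, so fewer than `log m / log 2 < 3P/4` of the primes divide `m`. Hence
`S(m²) ≥ P/4` there, and `(P/4)² ∑ ξ(m²) ≤ ∑ ξ(n) S(n)²`, which gives the theorem with `C = 16`.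
-/

open Finset Real

lemma abs_jacobiSym_le_one (a : ℤ) (b : ℕ) : |(jacobiSym a b : ℝ)| ≤ 1 := by
  rcases jacobiSym.trichotomy a b with h | h | h <;> simp [h]

lemma jacobiSym_sq_left (a : ℤ) (b : ℕ) [NeZero b] :
    jacobiSym (a ^ 2) b = if a.gcd b = 1 then 1 else 0 := by
  split_ifs with h
  · exact jacobiSym.sq_one' h
  · rw [jacobiSym.pow_left, jacobiSym.eq_zero_iff_not_coprime.mpr h, zero_pow two_ne_zero]

lemma jacobiSym_natCast_sq_left_of_prime (m : ℕ) {p : ℕ} (hp : p.Prime) :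
    jacobiSym ((m : ℤ) ^ 2) p = if p ∣ m then 0 else 1 := by
  have : NeZero p := ⟨hp.ne_zero⟩
  have hcop : (m : ℤ).gcd p = 1 ↔ ¬ p ∣ m := by
    rw [Int.gcd_natCast_natCast, ← Nat.coprime_iff_gcd_eq_one, Nat.coprime_comm,
      hp.coprime_iff_not_dvd]
  rw [jacobiSym_sq_left]
  split_ifs <;> simp_all

lemma sum_jacobiSym_sq_left_eq_card_filter {s : Finset ℕ} (hs : ∀ p ∈ s, p.Prime) (m : ℕ) :
    ∑ p ∈ s, (jacobiSym ((m : ℤ) ^ 2) p : ℝ) = #(s.filter (¬ · ∣ m)) := by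
  rw [← sum_boole]
  refine sum_congr rfl fun p hp => ?_
  rw [jacobiSym_natCast_sq_left_of_prime m (hs p hp)]
  split_ifs <;> simp

lemma two_pow_card_filter_dvd_le {s : Finset ℕ} (hs : ∀ p ∈ s, p.Prime) {m : ℕ} (hm : m ≠ 0) :
    2 ^ #(s.filter (· ∣ m)) ≤ m := by
  have hprime : ∀ p ∈ s.filter (· ∣ m), p.Prime := fun p hp => hs p (mem_filter.mp hp).1
  calc 2 ^ #(s.filter (· ∣ m)) = ∏ _p ∈ s.filter (· ∣ m), 2 := by rw [prod_const]
    _ ≤ ∏ p ∈ s.filter (· ∣ m), p := prod_le_prod' fun p hp => (hprime p hp).two_le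
    _ ≤ m := Nat.le_of_dvd (Nat.pos_of_ne_zero hm) <|
      prod_primes_dvd m (fun p hp => (hprime p hp).prime) fun p hp => (mem_filter.mp hp).2

lemma card_div_four_le_sum_jacobiSym_sq_left {s : Finset ℕ} (hs : ∀ p ∈ s, p.Prime) {m : ℕ}
    (hm : m ≠ 0) (hms : (m : ℝ) ^ 2 < exp #s) :
    (#s : ℝ) / 4 ≤ ∑ p ∈ s, (jacobiSym ((m : ℤ) ^ 2) p : ℝ) := by
  rw [sum_jacobiSym_sq_left_eq_card_filter hs]
  have hlog_dvd : #(s.filter (· ∣ m)) * log 2 ≤ log m := by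
    rw [← log_pow]
    exact log_le_log (by positivity) (by exact_mod_cast two_pow_card_filter_dvd_le hs hm)
  have hlog_m : 2 * log m < #s := by
    have h := log_lt_log (by positivity) hms
    rwa [log_pow, log_exp] at h
  have hsplit : (#(s.filter (· ∣ m)) : ℝ) + #(s.filter (¬ · ∣ m)) = #s := by
    exact_mod_cast card_filter_add_card_filter_not _
  nlinarith [log_two_gt_d9, (#(s.filter (· ∣ m))).cast_nonneg (α := ℝ)]

section Weighted

variable {ξ : ℕ → ℝ}

lemma Summable.mul_jacobiSym_mul_jacobiSym (hξ : Summable ξ) (p q : ℕ) :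
    Summable fun n : ℕ => ξ n * ((jacobiSym n p : ℝ) * jacobiSym n q) := by
  refine hξ.norm.of_norm_bounded fun n => ?_
  rw [norm_mul, Real.norm_eq_abs (_ * _), abs_mul]
  exact mul_le_of_le_one_right (norm_nonneg _)
    (mul_le_one₀ (abs_jacobiSym_le_one _ _) (abs_nonneg _) (abs_jacobiSym_le_one _ _))

lemma Summable.mul_sq_sum_jacobiSym (hξ : Summable ξ) (s : Finset ℕ) :
    Summable fun n : ℕ => ξ n * (∑ p ∈ s, (jacobiSym n p : ℝ)) ^ 2 := by
  simp_rw [sq, sum_mul_sum, mul_sum]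
  exact summable_sum fun p _ => summable_sum fun q _ => hξ.mul_jacobiSym_mul_jacobiSym p q

lemma tsum_mul_sq_sum_jacobiSym (hξ : Summable ξ) (s : Finset ℕ) :
    ∑' n : ℕ, ξ n * (∑ p ∈ s, (jacobiSym n p : ℝ)) ^ 2 =
      ∑ p ∈ s, ∑ q ∈ s, ∑' n : ℕ, ξ n * ((jacobiSym n p : ℝ) * jacobiSym n q) := by
  simp_rw [sq, sum_mul_sum, mul_sum]
  rw [Summable.tsum_finsetSum fun p _ =>
    summable_sum fun q _ => hξ.mul_jacobiSym_mul_jacobiSym p q]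
  exact sum_congr rfl fun p _ =>
    Summable.tsum_finsetSum fun q _ => hξ.mul_jacobiSym_mul_jacobiSym p q

lemma tsum_mul_jacobiSym_mul_self_le (hξ0 : ∀ n, 0 ≤ ξ n) (hξ : Summable ξ) (p : ℕ) :
    ∑' n : ℕ, ξ n * ((jacobiSym n p : ℝ) * jacobiSym n p) ≤ ∑' n : ℕ, ξ n := by
  refine hξ.mul_jacobiSym_mul_jacobiSym p p |>.tsum_le_tsum (fun n => ?_) hξ
  refine mul_le_of_le_one_right (hξ0 n) ?_
  rw [← abs_mul_self, abs_mul]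
  exact mul_le_one₀ (abs_jacobiSym_le_one _ _) (abs_nonneg _) (abs_jacobiSym_le_one _ _)

lemma tsum_mul_sq_sum_jacobiSym_le (hξ0 : ∀ n, 0 ≤ ξ n) (hξ : Summable ξ) {s : Finset ℕ}
    (hs : ∀ p ∈ s, p ≠ 0) :
    ∑' n : ℕ, ξ n * (∑ p ∈ s, (jacobiSym n p : ℝ)) ^ 2 ≤
      #s * ∑' n : ℕ, ξ n + ∑ p ∈ s, ∑ q ∈ s,
        if p ≠ q then |∑' n : ℕ, ξ n * (jacobiSym n (p * q) : ℝ)| else 0 := by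
  have hpair : ∀ p ∈ s, ∀ q ∈ s,
      ∑' n : ℕ, ξ n * ((jacobiSym n p : ℝ) * jacobiSym n q) ≤
        (if p = q then ∑' n : ℕ, ξ n else 0) +
          if p ≠ q then |∑' n : ℕ, ξ n * (jacobiSym n (p * q) : ℝ)| else 0 := by
    intro p hp q hq
    by_cases hpq : p = q
    · subst hpq
      simpa using tsum_mul_jacobiSym_mul_self_le hξ0 hξ p
    · simp only [hpq, if_false, ne_eq, not_false_eq_true, if_true, zero_add]
      refine le_of_eq_of_le (tsum_congr fun n => ?_) (le_abs_self _)
      rw [jacobiSym.mul_right' _ (hs p hp) (hs q hq), Int.cast_mul]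
  rw [tsum_mul_sq_sum_jacobiSym hξ]
  refine (sum_le_sum fun p hp => sum_le_sum fun q hq => hpair p hp q hq).trans_eq ?_
  simp_rw [sum_add_distrib, sum_ite_eq, sum_ite_mem, inter_self, sum_const, nsmul_eq_mul]

lemma sq_card_div_four_mul_tsum_comp_sq_le (hξ0 : ∀ n, 0 ≤ ξ n) (hξ : Summable ξ)
    {s : Finset ℕ} (hs : ∀ p ∈ s, p.Prime) (hξzero : ξ 0 = 0)
    (hξexp : ∀ n : ℕ, exp #s ≤ n → ξ n = 0) :
    ((#s : ℝ) / 4) ^ 2 * ∑' m : ℕ, ξ (m ^ 2) ≤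
      ∑' n : ℕ, ξ n * (∑ p ∈ s, (jacobiSym n p : ℝ)) ^ 2 := by
  have hinj : (fun m : ℕ => m ^ 2).Injective := Nat.pow_left_injective two_ne_zero
  have hF0 : ∀ n, 0 ≤ ξ n * (∑ p ∈ s, (jacobiSym n p : ℝ)) ^ 2 :=
    fun n => mul_nonneg (hξ0 n) (sq_nonneg _)
  rw [← tsum_mul_left]
  refine Summable.tsum_le_tsum_of_inj _ hinj (fun n _ => hF0 n) (fun m => ?_)
    ((hξ.comp_injective hinj).mul_left _) (hξ.mul_sq_sum_jacobiSym s)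
  by_cases hm2 : ξ (m ^ 2) = 0
  · simp [hm2]
  have hm : m ≠ 0 := by rintro rfl; simp_all
  have hms : (m : ℝ) ^ 2 < exp #s := by
    by_contra! h
    exact hm2 (hξexp _ (by exact_mod_cast h))
  have hsum := card_div_four_le_sum_jacobiSym_sq_left hs hm hms
  rw [mul_comm]
  push_cast
  exact mul_le_mul_of_nonneg_left (by gcongr) (hξ0 _)

end Weighted

/-- **The square sieve of Heath-Brown.** There is an absolute constant `C` such
that for any nonnegative summable `ξ : ℕ → ℝ` vanishing at `0` and for
`n ≥ e^P`, and any set `𝔓` of `P` primes,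
`∑_n ξ(n²) ≤ C ((1/P) ∑_n ξ(n) + (1/P²) ∑_{p ≠ q ∈ 𝔓} |∑_n ξ(n) (n/pq)|)`,
where `(·/pq)` is the Jacobi symbol mod `pq`. -/
theorem square_sieve :
    ∃ C : ℝ, ∀ (ξ : ℕ → ℝ) (𝔓 : Finset ℕ) (P : ℕ),
      (∀ n, 0 ≤ ξ n) → Summable ξ →
      (∀ p ∈ 𝔓, p.Prime) → 𝔓.card = P →
      ξ 0 = 0 → (∀ n : ℕ, Real.exp P ≤ (n : ℝ) → ξ n = 0) →
      (∑' n : ℕ, ξ (n ^ 2)) ≤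
        C * ((1 / (P : ℝ)) * ∑' n : ℕ, ξ n +
          (1 / (P : ℝ) ^ 2) *
            ∑ p ∈ 𝔓, ∑ q ∈ 𝔓,
              if p ≠ q then |∑' n : ℕ, ξ n * (jacobiSym (n : ℤ) (p * q) : ℝ)|
              else 0) := by
  refine ⟨16, fun ξ 𝔓 P hξ0 hξ hprime hcard hξzero hξexp => ?_⟩
  subst hcard
  rcases (#𝔓).eq_zero_or_pos with hP | hP
  -- With no primes, `e^0 = 1` leaves only `ξ 0 = 0`, and the right side is `16 * 0` (`1 / 0 = 0`).
  · have hsq : ∀ m : ℕ, ξ (m ^ 2) = 0 := fun m => by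
      rcases m.eq_zero_or_pos with rfl | hm
      · simpa using hξzero
      · exact hξexp _ (by simp [hP]; omega)
    simp [hsq, hP]
  have hsieve := (sq_card_div_four_mul_tsum_comp_sq_le hξ0 hξ hprime hξzero hξexp).trans
    (tsum_mul_sq_sum_jacobiSym_le hξ0 hξ fun p hp => (hprime p hp).ne_zero)
  have hP' : (0 : ℝ) < #𝔓 := by exact_mod_cast hP
  rw [div_pow, ← le_div_iff₀' (by positivity)] at hsieve
  refine hsieve.trans_eq ?_
  field_simp
  ring
end

section
/- There exist constants δ > 0 and C > 0 such that for all sufficiently large X and every real L with X^{1/4} ≤ L ≤ X: Σ_{L < ℓ ≤ 2L, ℓ integer} #{ n integer : X < n ≤ 2X and ℓ² | n² + 1 } ≤ C · X^{1−δ}. -/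
/-! Write `n² + 1 = ℓ² m`. For `L ≤ X^(3/4)`, Thue's pigeonhole argument attaches to each root
`n` of `n² ≡ -1 (mod ℓ²)` a primitive representation `ℓ² = a² + b²` with `a ≡ n b (mod ℓ²)`,
which determines `ℓ` and `n mod ℓ²`. Such legs are `(m² - k², 2mk)` up to order, with
`m² + k² = ℓ ≤ 2L`, so there are `O(L)` of them, each accounting for `O(X/L² + 1)` values of `n`:
`O(X/L + L) = O(X^(3/4))` pairs in all. For `L > X^(3/4)`, the map `(ℓ, n) ↦ m` is injective,
because two pairs with the same `m` satisfy `(n₁ℓ₂ - n₂ℓ₁)(n₁ℓ₂ + n₂ℓ₁) = ℓ₁² - ℓ₂²`, and the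
right side is too small for this unless both sides vanish; this leaves `O(X²/L²) = O(X^(1/2))`
pairs. -/

open Finset

/-- The box `[0, ℓ] × [0, ℓ)` is lopsided so that `a² + b² < 2ℓ²`, which forces `a² + b² = ℓ²`
in `exists_sq_add_sq_eq_sq_of_sq_dvd`. -/
theorem exists_abs_le_sq_dvd_sub_mul (ℓ : ℕ) (hℓ : 0 < ℓ) (r : ℤ) :
    ∃ a b : ℤ, (a ≠ 0 ∨ b ≠ 0) ∧ |a| ≤ ℓ ∧ |b| < ℓ ∧ (ℓ : ℤ) ^ 2 ∣ a - r * b := by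
  have : NeZero (ℓ ^ 2) := ⟨by positivity⟩
  obtain ⟨x, hx, y, hy, hxy, hfxy⟩ := exists_ne_map_eq_of_card_lt_of_maps_to
    (s := range (ℓ + 1) ×ˢ range ℓ) (t := (univ : Finset (ZMod (ℓ ^ 2))))
    (f := fun p => (p.1 : ZMod (ℓ ^ 2)) - r * p.2)
    (by simp only [card_product, card_range, card_univ, ZMod.card]; nlinarith)
    (fun _ _ => mem_univ _)
  simp only [mem_product, mem_range] at hx hy
  refine ⟨x.1 - y.1, x.2 - y.2, ?_, by rw [abs_le]; omega, by rw [abs_lt]; omega, ?_⟩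
  · by_contra! h
    exact hxy (Prod.ext (by omega) (by omega))
  · rw [← Nat.cast_pow, ← ZMod.intCast_zmod_eq_zero_iff_dvd]
    push_cast
    linear_combination hfxy

theorem exists_sq_add_sq_eq_sq_of_sq_dvd {ℓ : ℕ} {r : ℤ} (hℓ : 0 < ℓ)
    (hr : (ℓ : ℤ) ^ 2 ∣ r ^ 2 + 1) :
    ∃ a b : ℤ, a ^ 2 + b ^ 2 = ℓ ^ 2 ∧ (ℓ : ℤ) ^ 2 ∣ a - r * b := by
  obtain ⟨a, b, hab, ha, hb, hd⟩ := exists_abs_le_sq_dvd_sub_mul ℓ hℓ r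
  refine ⟨a, b, ?_, hd⟩
  obtain ⟨k, hk⟩ : (ℓ : ℤ) ^ 2 ∣ a ^ 2 + b ^ 2 := by
    rw [show a ^ 2 + b ^ 2 = (a - r * b) * (a + r * b) + b ^ 2 * (r ^ 2 + 1) by ring]
    exact dvd_add (hd.mul_right _) (hr.mul_left _)
  have hpos : 0 < a ^ 2 + b ^ 2 := by rcases hab with h | h <;> positivity
  have ha2 : a ^ 2 ≤ (ℓ : ℤ) ^ 2 := sq_abs a ▸ pow_le_pow_left₀ (abs_nonneg a) ha 2
  have hb2 : b ^ 2 < (ℓ : ℤ) ^ 2 := sq_abs b ▸ pow_lt_pow_left₀ hb (abs_nonneg b) two_ne_zero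
  obtain rfl : k = 1 := by
    have : 0 < k := by nlinarith
    have : k < 2 := by nlinarith
    omega
  simpa using hk

theorem isCoprime_of_sq_add_sq_eq_of_dvd {a b r q : ℤ} (hq : q ≠ 0) (hab : a ^ 2 + b ^ 2 = q)
    (ha : q ∣ a - r * b) (hr : q ∣ r ^ 2 + 1) : IsCoprime a b := by
  obtain ⟨k, hk⟩ := ha
  obtain ⟨m, hm⟩ := hr
  -- `(a - r b)(a + r b) = q - b² (r² + 1)`, divided by `q`, is a Bézout identity for `a, b`
  have : q * (k * (a + r * b)) = q * (1 - b ^ 2 * m) := by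
    linear_combination (-(a + r * b)) * hk - b ^ 2 * hm + hab
  refine ⟨k, k * r + b * m, ?_⟩
  linear_combination mul_left_cancel₀ hq this

noncomputable def pythagoreanLegs (N : ℕ) : Finset (ℤ × ℤ) :=
  let box := Icc (-(Nat.sqrt N : ℤ)) (Nat.sqrt N) ×ˢ Icc (-(Nat.sqrt N : ℤ)) (Nat.sqrt N)
  box.image (fun p => (p.1 ^ 2 - p.2 ^ 2, 2 * p.1 * p.2)) ∪
    box.image (fun p => (2 * p.1 * p.2, p.1 ^ 2 - p.2 ^ 2))

theorem card_pythagoreanLegs_le (N : ℕ) :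
    #(pythagoreanLegs N) ≤ 2 * (2 * Nat.sqrt N + 1) ^ 2 := by
  have hIcc : #(Icc (-(Nat.sqrt N : ℤ)) (Nat.sqrt N)) = 2 * Nat.sqrt N + 1 := by
    rw [Int.card_Icc]; omega
  refine (card_union_le _ _).trans ?_
  rw [two_mul]
  gcongr <;> exact card_image_le.trans (by rw [card_product, hIcc, sq])

theorem mem_pythagoreanLegs {a b c : ℤ} {N : ℕ} (h : a ^ 2 + b ^ 2 = c ^ 2)
    (hab : Int.gcd a b = 1) (hc : 0 < c) (hcN : c ≤ N) : (a, b) ∈ pythagoreanLegs N := by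
  obtain ⟨m, k, hmk, hc', -, -⟩ :=
    (PythagoreanTriple.coprime_classification (z := c)).mp
      ⟨by unfold PythagoreanTriple; linear_combination h, hab⟩
  have hcmk : c = m ^ 2 + k ^ 2 := hc'.resolve_right (by nlinarith)
  have hbox : ∀ t : ℤ, t ^ 2 ≤ c → t ∈ Icc (-(Nat.sqrt N : ℤ)) (Nat.sqrt N) := by
    intro t ht
    have : t.natAbs ≤ Nat.sqrt N := Nat.le_sqrt'.mpr (by zify; rw [sq_abs]; omega)
    rw [mem_Icc]; omega
  have hm := hbox m (by nlinarith)
  have hk := hbox k (by nlinarith)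
  simp only [pythagoreanLegs, mem_union, mem_image, mem_product, Prod.exists, Prod.mk.injEq]
  rcases hmk with ⟨rfl, rfl⟩ | ⟨rfl, rfl⟩
  · exact .inl ⟨m, k, ⟨hm, hk⟩, rfl, rfl⟩
  · exact .inr ⟨m, k, ⟨hm, hk⟩, rfl, rfl⟩

theorem dvd_sub_of_dvd_sub_mul_of_isCoprime {a b q n₁ n₂ : ℤ} (hab : IsCoprime a b)
    (h₁ : q ∣ a - n₁ * b) (h₂ : q ∣ a - n₂ * b) : q ∣ n₁ - n₂ := by
  obtain ⟨c, hc⟩ := h₂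
  have hqb : IsCoprime q b := IsCoprime.of_mul_left_left (z := b) (y := c) (by
    rw [← show a + b * -n₂ = q * c by linear_combination hc]
    exact hab.add_mul_left_left _)
  refine hqb.dvd_of_dvd_mul_right ?_
  rw [show (n₁ - n₂) * b = (a - n₂ * b) - (a - n₁ * b) by ring]
  exact dvd_sub ⟨c, hc⟩ h₁

theorem card_le_of_sq_dvd_sq_add_one_of_div_le (S : Finset (ℕ × ℕ)) (N J : ℕ)
    (hS : ∀ p ∈ S, p.1 ≤ N ∧ p.2 / p.1 ^ 2 ≤ J ∧ p.1 ^ 2 ∣ p.2 ^ 2 + 1) :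
    #S ≤ 2 * (2 * Nat.sqrt N + 1) ^ 2 * (J + 1) := by
  have hdvd : ∀ p ∈ S, (p.1 : ℤ) ^ 2 ∣ (p.2 : ℤ) ^ 2 + 1 := fun p hp => by
    exact_mod_cast (hS p hp).2.2
  have hpos : ∀ p ∈ S, 0 < p.1 := fun p hp => Nat.pos_of_ne_zero fun h => by
    have := hdvd p hp
    rw [h, Nat.cast_zero, zero_pow two_ne_zero, zero_dvd_iff] at this
    exact absurd this (by positivity)
  have hrep : ∀ p ∈ S, ∃ ab : ℤ × ℤ, ab.1 ^ 2 + ab.2 ^ 2 = (p.1 : ℤ) ^ 2 ∧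
      IsCoprime ab.1 ab.2 ∧ (p.1 : ℤ) ^ 2 ∣ ab.1 - p.2 * ab.2 := fun p hp => by
    obtain ⟨a, b, hab, had⟩ := exists_sq_add_sq_eq_sq_of_sq_dvd (hpos p hp) (hdvd p hp)
    exact ⟨(a, b), hab, isCoprime_of_sq_add_sq_eq_of_dvd (by simp [(hpos p hp).ne']) hab had
      (hdvd p hp), had⟩
  choose! rep hrep using hrep
  calc #S ≤ #(pythagoreanLegs N ×ˢ range (J + 1)) := by
        refine card_le_card_of_injOn (fun p => (rep p, p.2 / p.1 ^ 2)) ?_ ?_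
        · intro p hp
          obtain ⟨hsum, hcop, -⟩ := hrep p hp
          simp only [coe_product, coe_range, Set.mem_prod, mem_coe, Set.mem_Iio]
          exact ⟨mem_pythagoreanLegs hsum (Int.isCoprime_iff_gcd_eq_one.mp hcop)
            (by exact_mod_cast hpos p hp) (by exact_mod_cast (hS p hp).1),
            Nat.lt_succ_of_le (hS p hp).2.1⟩
        · rintro ⟨ℓ₁, n₁⟩ hp ⟨ℓ₂, n₂⟩ hq heq
          simp only [Prod.mk.injEq] at heq
          obtain ⟨hsum₁, -, hd₁⟩ := hrep _ hp
          obtain ⟨hsum₂, hcop, hd₂⟩ := hrep _ hq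
          rw [heq.1] at hsum₁ hd₁
          obtain rfl : ℓ₁ = ℓ₂ := Nat.pow_left_injective two_ne_zero
            (by exact_mod_cast hsum₁.symm.trans hsum₂ :)
          have hmod : ((ℓ₁ ^ 2 : ℕ) : ℤ) ∣ n₁ - n₂ := by
            push_cast
            exact dvd_sub_of_dvd_sub_mul_of_isCoprime hcop hd₁ hd₂
          simp only [Prod.mk.injEq, true_and]
          exact Nat.ext_div_modEq heq.2 (Nat.modEq_iff_dvd.mpr hmod).symm
    _ ≤ 2 * (2 * Nat.sqrt N + 1) ^ 2 * (J + 1) := by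
        rw [card_product, card_range]
        exact Nat.mul_le_mul_right _ (card_pythagoreanLegs_le N)

theorem eq_of_sq_mul_eq_sq_add_one {ℓ₁ ℓ₂ n₁ n₂ m : ℤ} (hℓ₁ : 0 ≤ ℓ₁) (hℓ₂ : 0 ≤ ℓ₂)
    (h₁ : ℓ₁ ^ 2 * m = n₁ ^ 2 + 1) (h₂ : ℓ₂ ^ 2 * m = n₂ ^ 2 + 1)
    (hn₁ : |ℓ₁ - ℓ₂| < n₁) (hn₂ : |ℓ₁ - ℓ₂| < n₂) : ℓ₁ = ℓ₂ ∧ n₁ = n₂ := by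
  have key : (n₁ * ℓ₂ - n₂ * ℓ₁) * (n₁ * ℓ₂ + n₂ * ℓ₁) = (ℓ₁ - ℓ₂) * (ℓ₁ + ℓ₂) := by
    linear_combination ℓ₁ ^ 2 * h₂ - ℓ₂ ^ 2 * h₁
  have hℓ : 0 < ℓ₁ + ℓ₂ := by
    by_contra! h
    obtain rfl : ℓ₁ = 0 := by omega
    nlinarith
  have habs := abs_nonneg (ℓ₁ - ℓ₂)
  by_cases hu : n₁ * ℓ₂ - n₂ * ℓ₁ = 0
  · obtain rfl : ℓ₁ = ℓ₂ := by
      rw [hu, zero_mul, eq_comm, mul_eq_zero] at key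
      exact sub_eq_zero.mp (key.resolve_right hℓ.ne')
    exact ⟨rfl, by nlinarith⟩
  · exfalso
    have hu1 : 1 ≤ |n₁ * ℓ₂ - n₂ * ℓ₁| := Int.one_le_abs hu
    have hP : 0 < n₁ * ℓ₂ + n₂ * ℓ₁ := by nlinarith
    have := congrArg abs key
    rw [abs_mul, abs_mul, abs_of_pos hℓ, abs_of_pos hP] at this
    nlinarith [mul_le_mul_of_nonneg_right hu1 hP.le]

theorem card_le_of_sq_dvd_sq_add_one_of_abs_sub_lt (S : Finset (ℕ × ℕ)) (M : ℕ)
    (hS : ∀ p ∈ S, p.1 ^ 2 ∣ p.2 ^ 2 + 1 ∧ (p.2 ^ 2 + 1) / p.1 ^ 2 ≤ M)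
    (hsep : ∀ p ∈ S, ∀ q ∈ S, |(p.1 : ℤ) - q.1| < q.2) : #S ≤ M + 1 := by
  calc #S ≤ #(range (M + 1)) := by
        refine card_le_card_of_injOn (fun p => (p.2 ^ 2 + 1) / p.1 ^ 2)
          (fun p hp => by simpa [Nat.lt_succ_iff] using (hS p hp).2) ?_
        rintro ⟨ℓ₁, n₁⟩ hp ⟨ℓ₂, n₂⟩ hq heq
        have h₁ := Nat.mul_div_cancel' (hS _ hp).1
        have h₂ := Nat.mul_div_cancel' (hS _ hq).1
        have hsep₁ := hsep _ hq _ hp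
        have hsep₂ := hsep _ hp _ hq
        simp only at heq h₁ h₂ hsep₁ hsep₂
        rw [heq] at h₁
        rw [abs_sub_comm] at hsep₁
        obtain ⟨h, h'⟩ := eq_of_sq_mul_eq_sq_add_one (m := ((n₂ ^ 2 + 1) / ℓ₂ ^ 2 : ℕ))
          (by positivity) (by positivity) (by exact_mod_cast h₁) (by exact_mod_cast h₂)
          hsep₁ hsep₂
        simp only [Prod.mk.injEq]
        exact ⟨by exact_mod_cast h, by exact_mod_cast h'⟩
    _ = M + 1 := card_range _

noncomputable def squareModuliPairs (L X : ℝ) : Finset (ℕ × ℕ) :=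
  {p ∈ range (⌊2 * L⌋₊ + 1) ×ˢ range (⌊2 * X⌋₊ + 1) |
    (L < p.1 ∧ (p.1 : ℝ) ≤ 2 * L) ∧ X < p.2 ∧ (p.2 : ℝ) ≤ 2 * X ∧ p.1 ^ 2 ∣ p.2 ^ 2 + 1}

theorem mem_squareModuliPairs {L X : ℝ} {p : ℕ × ℕ} :
    p ∈ squareModuliPairs L X ↔
      (L < p.1 ∧ (p.1 : ℝ) ≤ 2 * L) ∧ X < p.2 ∧ (p.2 : ℝ) ≤ 2 * X ∧ p.1 ^ 2 ∣ p.2 ^ 2 + 1 := by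
  simp only [squareModuliPairs, mem_filter, mem_product, mem_range, Nat.lt_succ_iff,
    and_iff_right_iff_imp]
  exact fun h => ⟨Nat.le_floor h.1.2, Nat.le_floor h.2.2.1⟩

theorem sum_card_eq_card_squareModuliPairs (L X : ℝ) :
    ∑ ℓ ∈ (range (⌊2 * L⌋₊ + 1)).filter (fun ℓ : ℕ => L < (ℓ : ℝ) ∧ (ℓ : ℝ) ≤ 2 * L),
      #((range (⌊2 * X⌋₊ + 1)).filter
        (fun n : ℕ => X < (n : ℝ) ∧ (n : ℝ) ≤ 2 * X ∧ ℓ ^ 2 ∣ n ^ 2 + 1)) =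
      #(squareModuliPairs L X) := by
  rw [squareModuliPairs, card_filter, sum_product, sum_filter]
  refine sum_congr rfl fun ℓ _ => ?_
  split_ifs with h
  · rw [card_filter]; simp only [h, true_and]
  · simp [h]

theorem card_squareModuliPairs_le_div_add_mul {L X : ℝ} (hL : 1 ≤ L) (hX : 0 ≤ X) :
    (#(squareModuliPairs L X) : ℝ) ≤ 72 * (X / L) + 36 * L := by
  set N := ⌊2 * L⌋₊
  set J := ⌊2 * X / L ^ 2⌋₊
  have hcard := card_le_of_sq_dvd_sq_add_one_of_div_le (squareModuliPairs L X) N J fun p hp => by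
    obtain ⟨⟨hℓ, hℓ'⟩, -, hn', hd⟩ := mem_squareModuliPairs.mp hp
    refine ⟨Nat.le_floor hℓ', Nat.le_floor ?_, hd⟩
    calc ((p.2 / p.1 ^ 2 : ℕ) : ℝ) ≤ p.2 / (p.1 : ℝ) ^ 2 := by exact_mod_cast Nat.cast_div_le
      _ ≤ 2 * X / L ^ 2 := div_le_div₀ (by positivity) hn' (by positivity) (by nlinarith)
  have hs : 1 ≤ Nat.sqrt N := Nat.le_sqrt'.mpr (Nat.le_floor (by push_cast; linarith))
  have hsN : (2 * Nat.sqrt N + 1) ^ 2 ≤ 9 * N := by nlinarith [Nat.sqrt_le' N]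
  have hN : (N : ℝ) ≤ 2 * L := Nat.floor_le (by linarith)
  have hJ : (J : ℝ) ≤ 2 * X / L ^ 2 := Nat.floor_le (by positivity)
  calc (#(squareModuliPairs L X) : ℝ) ≤ 2 * (9 * N) * (J + 1) := by
        exact_mod_cast hcard.trans (by gcongr)
    _ ≤ 2 * (9 * (2 * L)) * (2 * X / L ^ 2 + 1) := by gcongr
    _ = 72 * (X / L) + 36 * L := by field_simp; ring

theorem card_squareModuliPairs_le_sq_div_sq_add_one {L X : ℝ} (hL : 0 < L) (hLX : L ≤ X) :
    (#(squareModuliPairs L X) : ℝ) ≤ (4 * X ^ 2 + 1) / L ^ 2 + 1 := by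
  have hcard := card_le_of_sq_dvd_sq_add_one_of_abs_sub_lt (squareModuliPairs L X)
    ⌊(4 * X ^ 2 + 1) / L ^ 2⌋₊ (fun p hp => by
      obtain ⟨⟨hℓ, -⟩, hn, hn', hd⟩ := mem_squareModuliPairs.mp hp
      refine ⟨hd, Nat.le_floor ?_⟩
      calc (((p.2 ^ 2 + 1) / p.1 ^ 2 : ℕ) : ℝ) ≤ ((p.2 : ℝ) ^ 2 + 1) / (p.1 : ℝ) ^ 2 :=
            Nat.cast_div_le.trans_eq (by push_cast; rfl)
        _ ≤ (4 * X ^ 2 + 1) / L ^ 2 :=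
            div_le_div₀ (by positivity) (by nlinarith) (by positivity) (by nlinarith))
    (fun p hp q hq => by
      obtain ⟨⟨hp₁, hp₁'⟩, -⟩ := mem_squareModuliPairs.mp hp
      obtain ⟨⟨hq₁, hq₁'⟩, hq₂, -⟩ := mem_squareModuliPairs.mp hq
      have : |(p.1 : ℝ) - q.1| < q.2 := by rw [abs_lt]; constructor <;> linarith
      exact_mod_cast this)
  have hM : (⌊(4 * X ^ 2 + 1) / L ^ 2⌋₊ : ℝ) ≤ (4 * X ^ 2 + 1) / L ^ 2 :=
    Nat.floor_le (by positivity)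
  calc (#(squareModuliPairs L X) : ℝ) ≤ ⌊(4 * X ^ 2 + 1) / L ^ 2⌋₊ + 1 := by exact_mod_cast hcard
    _ ≤ (4 * X ^ 2 + 1) / L ^ 2 + 1 := by gcongr

/-- **Square-moduli bound** (used for `H₄(X)` in Wu–Xi): there exist `δ > 0`
and `C > 0` such that for all large `X` and all `X^(1/4) ≤ L ≤ X`,
`∑_{L < ℓ ≤ 2L} #{X < n ≤ 2X : ℓ² | n² + 1} ≤ C X^(1-δ)`. -/
theorem square_moduli_bound :
    ∃ δ C : ℝ, 0 < δ ∧ 0 < C ∧ ∃ X₀ : ℝ, ∀ X : ℝ, X₀ ≤ X →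
      ∀ L : ℝ, X ^ ((1 : ℝ) / 4) ≤ L → L ≤ X →
        ∑ ℓ ∈ (Finset.range (⌊2 * L⌋₊ + 1)).filter
            (fun ℓ : ℕ => L < (ℓ : ℝ) ∧ (ℓ : ℝ) ≤ 2 * L),
          (((Finset.range (⌊2 * X⌋₊ + 1)).filter
              (fun n : ℕ => X < (n : ℝ) ∧ (n : ℝ) ≤ 2 * X ∧
                ℓ ^ 2 ∣ n ^ 2 + 1)).card : ℝ)
        ≤ C * X ^ ((1 : ℝ) - δ) := by
  refine ⟨1 / 4, 108, by norm_num, by norm_num, 1, fun X hX L hL hLX => ?_⟩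
  set Y := X ^ ((1 : ℝ) / 4) with hY
  have hXY : X = Y ^ 4 := by
    rw [hY, ← Real.rpow_mul_natCast (by linarith)]; norm_num
  have hXδ : X ^ ((1 : ℝ) - 1 / 4) = Y ^ 3 := by
    rw [hY, ← Real.rpow_mul_natCast (by linarith)]; norm_num
  have hY1 : 1 ≤ Y := Real.one_le_rpow hX (by norm_num)
  rw [← Nat.cast_sum, sum_card_eq_card_squareModuliPairs, hXδ]
  rcases le_or_gt L (Y ^ 3) with hsmall | hlarge
  · have hXL : X / L ≤ Y ^ 3 := by
      rw [div_le_iff₀ (by linarith), hXY]; nlinarith [pow_pos (by linarith : (0 : ℝ) < Y) 3]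
    linarith [card_squareModuliPairs_le_div_add_mul (hY1.trans hL) (by linarith : (0 : ℝ) ≤ X)]
  · have hXL : (4 * X ^ 2 + 1) / L ^ 2 ≤ 5 * Y ^ 2 := by
      rw [div_le_iff₀ (by nlinarith), hXY]
      nlinarith [pow_le_pow_left₀ (by positivity) hlarge.le 2, pow_le_pow_left₀ zero_le_one hY1 8]
    nlinarith [card_squareModuliPairs_le_sq_div_sq_add_one (by linarith) hLX]
end

section
/- With ϑ = 0.847 one has ∫_{1/2}^{ϑ} 2/γ(θ) dθ < 3/2; explicitly, ∫_{1/2}^{64/97} 124/(91 − 89θ) dθ + ∫_{64/97}^{32/41} 120/(86 − 83θ) dθ + ∫_{32/41}^{0.847} 28/(19 − 18θ) dθ < 3/2. -/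
/-- The sieve exponent `γ(θ)` of Wu–Xi. -/
noncomputable def gammaWX (θ : ℝ) : ℝ :=
  if θ < 64 / 97 then (91 - 89 * θ) / 62
  else if θ < 32 / 41 then (86 - 83 * θ) / 60
  else (19 - 18 * θ) / 14

/-!
On each of its three pieces `2 / γ` is `c / (d - e θ)`, whose integral is `(c / e) log` of the
ratio of the endpoint values of `d - e θ`. The three terms add up to `1.49828…`, only `0.0017`
below `3 / 2`, so each logarithm is bounded by a four-digit decimal `y`, certified by comparing
the ratio with the degree-5 Taylor polynomial of `exp y`, which lies below `exp y` for `y ≥ 0`.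
-/

open Real Set intervalIntegral
open MeasureTheory (volume)

theorem sub_mul_pos_of_mem_uIcc {a b d e θ : ℝ} (ha : 0 < d - e * a) (hb : 0 < d - e * b)
    (hθ : θ ∈ uIcc a b) : 0 < d - e * θ := by
  rcases le_total a b with hab | hab
  · rw [uIcc_of_le hab] at hθ
    rcases le_total 0 e with he | he <;> nlinarith [hθ.1, hθ.2]
  · rw [uIcc_of_ge hab] at hθ
    rcases le_total 0 e with he | he <;> nlinarith [hθ.1, hθ.2]

theorem intervalIntegrable_div_sub_mul {a b c d e : ℝ} (ha : 0 < d - e * a)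
    (hb : 0 < d - e * b) : IntervalIntegrable (fun θ => c / (d - e * θ)) volume a b :=
  (continuousOn_const.div (by fun_prop) fun _ hθ =>
    (sub_mul_pos_of_mem_uIcc ha hb hθ).ne').intervalIntegrable

theorem integral_div_sub_mul {a b c d e : ℝ} (he : e ≠ 0) (ha : 0 < d - e * a)
    (hb : 0 < d - e * b) :
    ∫ θ in a..b, c / (d - e * θ) = c / e * log ((d - e * a) / (d - e * b)) := by
  simp_rw [div_eq_mul_one_div c]
  rw [integral_const_mul, integral_comp_sub_mul (fun x => 1 / x) he,
    integral_one_div_of_pos hb ha, smul_eq_mul, ← mul_assoc, one_div]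

theorem log_le_of_le_sum_pow_div_factorial {x y : ℝ} (hx : 0 < x) (hy : 0 ≤ y) (n : ℕ)
    (h : x ≤ ∑ i ∈ Finset.range n, y ^ i / i.factorial) : log x ≤ y :=
  (log_le_iff_le_exp hx).2 (h.trans (sum_le_exp_of_nonneg hy n))

-- `γ` is continuous: adjacent pieces agree at the breakpoints `64 / 97` and `32 / 41`.
theorem gammaWX_of_le {θ : ℝ} (h : θ ≤ 64 / 97) : gammaWX θ = (91 - 89 * θ) / 62 := by
  rw [gammaWX]
  split_ifs
  · rfl
  all_goals obtain rfl : θ = 64 / 97 := by linarith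
  all_goals norm_num at *

theorem gammaWX_of_mem_Icc {θ : ℝ} (h : θ ∈ Icc (64 / 97) (32 / 41)) :
    gammaWX θ = (86 - 83 * θ) / 60 := by
  rw [gammaWX, if_neg (not_lt.2 h.1)]
  split_ifs
  · rfl
  · obtain rfl : θ = 32 / 41 := by linarith [h.2]
    norm_num

theorem gammaWX_of_ge {θ : ℝ} (h : 32 / 41 ≤ θ) : gammaWX θ = (19 - 18 * θ) / 14 := by
  rw [gammaWX, if_neg (by linarith), if_neg (by linarith)]

theorem two_div_gammaWX_eqOn_first :
    EqOn (fun θ => 2 / gammaWX θ) (fun θ => 124 / (91 - 89 * θ)) (uIcc (1 / 2) (64 / 97)) := by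
  intro θ hθ
  rw [uIcc_of_le (by norm_num)] at hθ
  simp only [gammaWX_of_le hθ.2, div_div_eq_mul_div]
  norm_num

theorem two_div_gammaWX_eqOn_second :
    EqOn (fun θ => 2 / gammaWX θ) (fun θ => 120 / (86 - 83 * θ))
      (uIcc (64 / 97) (32 / 41)) := by
  intro θ hθ
  rw [uIcc_of_le (by norm_num)] at hθ
  simp only [gammaWX_of_mem_Icc hθ, div_div_eq_mul_div]
  norm_num

theorem two_div_gammaWX_eqOn_third :
    EqOn (fun θ => 2 / gammaWX θ) (fun θ => 28 / (19 - 18 * θ)) (uIcc (32 / 41) 0.847) := by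
  intro θ hθ
  rw [uIcc_of_le (by norm_num)] at hθ
  simp only [gammaWX_of_ge hθ.1, div_div_eq_mul_div]
  norm_num

theorem integral_two_div_gammaWX :
    ∫ θ in (1 / 2 : ℝ)..0.847, 2 / gammaWX θ =
      (∫ θ in (1 / 2 : ℝ)..64 / 97, 124 / (91 - 89 * θ)) +
        (∫ θ in (64 / 97 : ℝ)..32 / 41, 120 / (86 - 83 * θ)) +
        ∫ θ in (32 / 41 : ℝ)..0.847, 28 / (19 - 18 * θ) := by
  have h₁ : IntervalIntegrable (fun θ => 2 / gammaWX θ) volume (1 / 2) (64 / 97) :=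
    (intervalIntegrable_div_sub_mul (by norm_num) (by norm_num)).congr
      (two_div_gammaWX_eqOn_first.symm.mono uIoc_subset_uIcc)
  have h₂ : IntervalIntegrable (fun θ => 2 / gammaWX θ) volume (64 / 97) (32 / 41) :=
    (intervalIntegrable_div_sub_mul (by norm_num) (by norm_num)).congr
      (two_div_gammaWX_eqOn_second.symm.mono uIoc_subset_uIcc)
  have h₃ : IntervalIntegrable (fun θ => 2 / gammaWX θ) volume (32 / 41) 0.847 :=
    (intervalIntegrable_div_sub_mul (by norm_num) (by norm_num)).congr
      (two_div_gammaWX_eqOn_third.symm.mono uIoc_subset_uIcc)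
  rw [← integral_add_adjacent_intervals (h₁.trans h₂) h₃,
    ← integral_add_adjacent_intervals h₁ h₂, integral_congr two_div_gammaWX_eqOn_first,
    integral_congr two_div_gammaWX_eqOn_second, integral_congr two_div_gammaWX_eqOn_third]

/-- **The numerical inequality for Theorem 2 of Wu–Xi**: with `ϑ = 0.847`,
`∫_{1/2}^{ϑ} 2/γ(θ) dθ < 3/2`; explicitly,
`∫_{1/2}^{64/97} 124/(91-89θ) dθ + ∫_{64/97}^{32/41} 120/(86-83θ) dθ
  + ∫_{32/41}^{0.847} 28/(19-18θ) dθ < 3/2`. -/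
theorem numerical_integral_inequality :
    (∫ θ in (1 / 2 : ℝ)..(0.847 : ℝ), 2 / gammaWX θ) < 3 / 2 ∧
    (∫ θ in (1 / 2 : ℝ)..(64 / 97 : ℝ), 124 / (91 - 89 * θ)) +
      (∫ θ in (64 / 97 : ℝ)..(32 / 41 : ℝ), 120 / (86 - 83 * θ)) +
      (∫ θ in (32 / 41 : ℝ)..(0.847 : ℝ), 28 / (19 - 18 * θ)) < 3 / 2 := by
  have explicit : (∫ θ in (1 / 2 : ℝ)..(64 / 97 : ℝ), 124 / (91 - 89 * θ)) +
      (∫ θ in (64 / 97 : ℝ)..(32 / 41 : ℝ), 120 / (86 - 83 * θ)) +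
      (∫ θ in (32 / 41 : ℝ)..(0.847 : ℝ), 28 / (19 - 18 * θ)) < 3 / 2 := by
    rw [integral_div_sub_mul (by norm_num) (by norm_num) (by norm_num),
      integral_div_sub_mul (by norm_num) (by norm_num) (by norm_num),
      integral_div_sub_mul (by norm_num) (by norm_num) (by norm_num)]
    have h₁ : log ((91 - 89 * (1 / 2)) / (91 - 89 * (64 / 97))) ≤ 0.3651 :=
      log_le_of_le_sum_pow_div_factorial (by norm_num) (by norm_num) 6
        (by norm_num [Finset.sum_range_succ, Nat.factorial])
    have h₂ : log ((86 - 83 * (64 / 97)) / (86 - 83 * (32 / 41))) ≤ 0.3867 :=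
      log_le_of_le_sum_pow_div_factorial (by norm_num) (by norm_num) 6
        (by norm_num [Finset.sum_range_succ, Nat.factorial])
    have h₃ : log ((19 - 18 * (32 / 41)) / (19 - 18 * 0.847)) ≤ 0.2769 :=
      log_le_of_le_sum_pow_div_factorial (by norm_num) (by norm_num) 6
        (by norm_num [Finset.sum_range_succ, Nat.factorial])
    linarith
  exact ⟨integral_two_div_gammaWX ▸ explicit, explicit⟩
end
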